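/- Let c_1 ≥ ... ≥ c_r be integers, and for 1 ≤ i < j ≤ r let b_{i,j}(z) = ∑_{p=0}^{c_i−c_j−1} b_{i,j}^p z^p be a polynomial (the empty sum if c_i ≤ c_j), b_{i,i} = 1, b_{i,j} = 0 for i > j. Let Q(z) be a holomorphic r×r matrix-valued function near 0 such that every bottom-right square minor of Q(0) is nonsingular. Then the coefficients b_{i,j}^p can be chosen so that for all i < m, the (i,m) entry of b(z)Q(z) is divisible by z^{c_i − c_m} (as a germ of holomorphic function). -/
import Mathlib

open Complex Matrix Finset Filter

lemma bolibruch_factor_zero {f : ℂ → ℂ} (hf : AnalyticAt ℂ f 0) (h0 : f 0 = 0) :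
    ∃ g : ℂ → ℂ, AnalyticAt ℂ g 0 ∧ ∀ z, f z = z * g z := by
  refine ⟨dslope f 0, ?_, ?_⟩
  · obtain ⟨p, hp⟩ := hf
    exact ⟨p.fslope, hp.has_fpower_series_dslope_fslope⟩
  · intro z
    by_cases hz : z = 0
    · simp [hz, h0]
    · rw [dslope_of_ne f hz, slope_def_field, h0, sub_zero, sub_zero]
      field_simp

lemma bolibruch_upclosed {r : ℕ} (S : Finset (Fin r))
    (hS : ∀ ⦃j j' : Fin r⦄, j ≤ j' → j ∈ S → j' ∈ S) (j : Fin r) :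
    j ∈ S ↔ r - S.card ≤ j.val := by
  rcases S.eq_empty_or_nonempty with h | h
  · subst h
    simp only [Finset.notMem_empty, Finset.card_empty, Nat.sub_zero, false_iff, not_le]
    exact j.isLt
  · obtain ⟨j₀, hj₀⟩ : ∃ j₀ : Fin r, S = Finset.Ici j₀ := by
      refine ⟨S.min' h, ?_⟩
      apply Finset.ext; intro x
      simp only [Finset.mem_Ici]
      exact ⟨fun hx => S.min'_le x hx, fun hx => hS hx (S.min'_mem h)⟩
    have hlt := j₀.isLt
    rw [hj₀, Fin.card_Ici, Finset.mem_Ici, Fin.le_def]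
    omega

/-- Bolibruch's lemma: given `c₁ ≥ ... ≥ c_r` and `Q` holomorphic near `0` with all
bottom-right minors of `Q 0` nonsingular, there is a unipotent upper-triangular
polynomial matrix `b(z)` with `deg b_{i,j} < c_i - c_j` such that for `i < m` the
`(i,m)` entry of `b(z) Q(z)` is divisible by `z^{c_i - c_m}`. -/
theorem bolibruch_gauge_lemma {r : ℕ}
    (c : Fin r → ℤ) (hc : Antitone c)
    (Q : ℂ → Matrix (Fin r) (Fin r) ℂ)
    (hQ : ∀ i j, AnalyticAt ℂ (fun z => Q z i j) 0)
    (hminors : ∀ k : ℕ, 1 ≤ k → (hk : k ≤ r) →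
      IsUnit (((Q 0).submatrix
        (fun i : Fin k => (⟨r - k + i, by omega⟩ : Fin r))
        (fun j : Fin k => (⟨r - k + j, by omega⟩ : Fin r))).det)) :
    ∃ bc : Fin r → Fin r → ℕ → ℂ,
      ∀ b : ℂ → Matrix (Fin r) (Fin r) ℂ,
        (∀ z i j, b z i j =
          if i = j then 1
          else if i < j then
            ∑ p ∈ Finset.range (c i - c j).toNat, bc i j p * z ^ p
          else 0) →
        ∀ i m : Fin r, i < m →
          ∃ g : ℂ → ℂ, AnalyticAt ℂ g 0 ∧
            ∀ᶠ z in nhds (0 : ℂ),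
              (b z * Q z) i m = z ^ (c i - c m).toNat * g z := by
  have key : ∀ i : Fin r, ∃ β : ℕ → Fin r → ℂ, ∀ m : Fin r, i < m →
      ∃ g : ℂ → ℂ, AnalyticAt ℂ g 0 ∧ ∀ᶠ z in nhds (0:ℂ),
        Q z i m + ∑ j ∈ Finset.univ.filter (fun j => i < j),
            (∑ q ∈ Finset.range ((c i - c j).toNat), β q j * z ^ q) * Q z j m
          = z ^ ((c i - c m).toNat) * g z := by
    intro i
    have dpos : ∀ j : Fin r, 0 < (c i - c j).toNat → i < j := by
      intro j h
      by_contra hle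
      push_neg at hle
      have := hc hle
      omega
    -- main induction on the order p
    have main : ∀ p : ℕ, ∃ β : ℕ → Fin r → ℂ, ∀ m : Fin r, i < m →
        ∃ g : ℂ → ℂ, AnalyticAt ℂ g 0 ∧ ∀ᶠ z in nhds (0:ℂ),
          Q z i m + ∑ j ∈ Finset.univ.filter (fun j => i < j),
              (∑ q ∈ Finset.range (min ((c i - c j).toNat) p), β q j * z ^ q) * Q z j m
            = z ^ (min ((c i - c m).toNat) p) * g z := by
      intro p
      induction p with
      | zero =>
        refine ⟨fun _ _ => 0, fun m him => ⟨fun z => Q z i m, hQ i m, ?_⟩⟩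
        apply Filter.Eventually.of_forall
        intro z
        simp
      | succ p ih =>
        obtain ⟨β, hβ⟩ := ih
        choose g hg hge using hβ
        obtain ⟨G, hGdef⟩ : ∃ G : Fin r → ℂ → ℂ, ∀ m (h : i < m), G m = g m h :=
          ⟨fun m => if h : i < m then g m h else 0, fun m h => dif_pos h⟩
        have hgG : ∀ m (h : i < m), AnalyticAt ℂ (G m) 0 := fun m h => (hGdef m h) ▸ hg m h
        have hgeG : ∀ m (h : i < m), ∀ᶠ z in nhds (0:ℂ),
            Q z i m + ∑ j ∈ Finset.univ.filter (fun j => i < j),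
              (∑ q ∈ Finset.range (min ((c i - c j).toNat) p), β q j * z ^ q) * Q z j m
            = z ^ (min ((c i - c m).toNat) p) * G m z :=
          fun m h => (hGdef m h) ▸ hge m h
        set S : Finset (Fin r) := Finset.univ.filter (fun j => p < (c i - c j).toNat) with hS
        have hSmem : ∀ j : Fin r, j ∈ S ↔ r - S.card ≤ j.val := by
          apply bolibruch_upclosed
          intro j j' hjj hj
          rw [hS, Finset.mem_filter] at hj ⊢
          have := hc hjj
          exact ⟨Finset.mem_univ _, by omega⟩
        have hSi : ∀ j ∈ S, i < j := by
          intro j hj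
          rw [hS, Finset.mem_filter] at hj
          exact dpos j (by omega)
        set k : ℕ := S.card with hk
        have hkr : k ≤ r := by
          rw [hk]
          simpa using Finset.card_le_card (Finset.subset_univ S)
        by_cases hk0 : k = 0
        · -- no new coefficients to choose
          have hSemp : S = ∅ := Finset.card_eq_zero.mp (hk ▸ hk0)
          have hdle : ∀ j : Fin r, (c i - c j).toNat ≤ p := by
            intro j
            by_contra hcon
            have : j ∈ S := by rw [hS, Finset.mem_filter]; exact ⟨Finset.mem_univ _, by omega⟩
            rw [hSemp] at this
            exact absurd this (Finset.notMem_empty _)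
          refine ⟨β, fun m him => ⟨G m, hgG m him, ?_⟩⟩
          have h2 : ∀ j : Fin r, min ((c i - c j).toNat) (p+1) = min ((c i - c j).toNat) p :=
            fun j => by have := hdle j; omega
          filter_upwards [hgeG m him] with z hz
          simp only [h2]
          exact hz
        · -- solve the linear system at order p
          have hkpos : 1 ≤ k := Nat.one_le_iff_ne_zero.mpr hk0
          have mfinlt : ∀ a : Fin k, r - k + a.val < r := fun a => by have := a.isLt; omega
          set mfin : Fin k → Fin r := fun a => ⟨r - k + a.val, mfinlt a⟩ with hmfin
          have hmfininj : Function.Injective mfin := by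
            intro a b h
            rw [hmfin] at h
            have := congrArg Fin.val h
            simp only [] at this
            exact Fin.ext (by omega)
          have hmfinS : ∀ a : Fin k, mfin a ∈ S := by
            intro a
            rw [hSmem, hmfin]
            simp only [← hk]
            omega
          have hSeq : S = Finset.map ⟨mfin, hmfininj⟩ Finset.univ := by
            ext x
            simp only [Finset.mem_map, Finset.mem_univ, true_and, Function.Embedding.coeFn_mk]
            rw [hSmem]
            constructor
            · intro hx
              refine ⟨⟨x.val - (r - k), by have := x.isLt; omega⟩, ?_⟩
              apply Fin.ext
              simp only [hmfin, ← hk]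
              omega
            · rintro ⟨a, rfl⟩
              simp only [hmfin, ← hk]
              omega
          set M : Matrix (Fin k) (Fin k) ℂ := (Q 0).submatrix mfin mfin with hM
          have hdetM : IsUnit M.det := by
            rw [hM, hmfin]
            exact hminors k hkpos hkr
          set vv : Fin k → ℂ := fun b'' => -(G (mfin b'') 0) with hvv
          set γ : Fin k → ℂ := Matrix.vecMul vv M⁻¹ with hγdef
          have hγ : Matrix.vecMul γ M = vv := by
            rw [hγdef, Matrix.vecMul_vecMul, Matrix.nonsing_inv_mul M hdetM, Matrix.vecMul_one]
          have hγsum : ∀ b'' : Fin k, (∑ a : Fin k, γ a * M a b'') = vv b'' := by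
            intro b''
            have := congrFun hγ b''
            simpa [Matrix.vecMul, dotProduct] using this
          obtain ⟨γ', hγ'mem, hγ'0⟩ :
              ∃ γ' : Fin r → ℂ,
                (∀ j : Fin r, ∀ _ : r - k ≤ j.val,
                  γ' j = γ ⟨j.val - (r - k), by have := j.isLt; omega⟩) ∧
                (∀ j : Fin r, ¬ r - k ≤ j.val → γ' j = 0) :=
            ⟨fun j => if h : r - k ≤ j.val then γ ⟨j.val - (r - k), by have := j.isLt; omega⟩
              else 0,
             fun j h => dif_pos h, fun j h => dif_neg h⟩
          obtain ⟨β', hβ'lt, hβ'p⟩ :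
              ∃ β' : ℕ → Fin r → ℂ,
                (∀ q j, q ≠ p → β' q j = β q j) ∧ (∀ j, β' p j = γ' j) :=
            ⟨fun q j => if q = p then γ' j else β q j,
             fun q j hq => if_neg hq, fun j => if_pos rfl⟩
          set E : Fin r → ℂ → ℂ :=
            fun m z => ∑ j ∈ Finset.univ.filter (fun j => i < j), γ' j * Q z j m with hE
          have hEan : ∀ m : Fin r, AnalyticAt ℂ (E m) 0 := by
            intro m
            rw [hE]
            exact Finset.analyticAt_fun_sum _ fun j _ => analyticAt_const.mul (hQ j m)
          have hE0 : ∀ m, m ∈ S → E m 0 = -(G m 0) := by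
            intro m hm
            have hmv : r - k ≤ m.val := (hSmem m).mp hm
            have hb'lt : m.val - (r - k) < k := by have := m.isLt; omega
            have hmb : mfin ⟨m.val - (r - k), hb'lt⟩ = m := by
              apply Fin.ext
              simp only [hmfin]
              omega
            have step1 : ∑ j ∈ Finset.univ.filter (fun j => i < j), γ' j * Q 0 j m
                = ∑ j ∈ S, γ' j * Q 0 j m := by
              refine (Finset.sum_subset ?_ ?_).symm
              · intro j hj
                simp only [Finset.mem_filter, Finset.mem_univ, true_and]
                exact hSi j hj
              · intro j _ hj
                rw [hγ'0 j (fun h => hj ((hSmem j).mpr h)), zero_mul]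
            have step2 : ∀ a : Fin k,
                γ' (mfin a) * Q 0 (mfin a) m = γ a * M a ⟨m.val - (r - k), hb'lt⟩ := by
              intro a
              rw [hγ'mem (mfin a) (by simp only [hmfin]; omega)]
              simp only [hM, Matrix.submatrix_apply, hmb]
              congr 2
              apply Fin.ext
              simp only [hmfin]
              omega
            rw [hE]
            simp only []
            rw [step1, hSeq, Finset.sum_map]
            simp only [Function.Embedding.coeFn_mk]
            rw [Finset.sum_congr rfl (fun a _ => step2 a), hγsum]
            simp only [hvv]
            rw [hmb]
          have hpoly : ∀ (j : Fin r) (z : ℂ),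
              (∑ q ∈ Finset.range (min ((c i - c j).toNat) (p+1)), β' q j * z ^ q)
              = (∑ q ∈ Finset.range (min ((c i - c j).toNat) p), β q j * z ^ q)
                + γ' j * z ^ p := by
            intro j z
            by_cases hj : p < (c i - c j).toNat
            · rw [show min ((c i - c j).toNat) (p+1) = p+1 from by omega,
                show min ((c i - c j).toNat) p = p from by omega,
                Finset.sum_range_succ, hβ'p]
              congr 1
              exact Finset.sum_congr rfl fun q hq => by
                rw [hβ'lt q j (by simp only [Finset.mem_range] at hq; omega)]
            · have hjS : ¬ r - k ≤ j.val := by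
                intro h
                have := (hSmem j).mpr h
                rw [hS, Finset.mem_filter] at this
                exact hj this.2
              rw [hγ'0 j hjS, zero_mul, add_zero,
                show min ((c i - c j).toNat) (p+1) = min ((c i - c j).toNat) p from by omega]
              exact Finset.sum_congr rfl fun q hq => by
                rw [hβ'lt q j (by simp only [Finset.mem_range] at hq; omega)]
          have hF' : ∀ (m : Fin r) (z : ℂ),
              Q z i m + ∑ j ∈ Finset.univ.filter (fun j => i < j),
                (∑ q ∈ Finset.range (min ((c i - c j).toNat) (p+1)), β' q j * z ^ q) * Q z j m
              = (Q z i m + ∑ j ∈ Finset.univ.filter (fun j => i < j),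
                (∑ q ∈ Finset.range (min ((c i - c j).toNat) p), β q j * z ^ q) * Q z j m)
                + z ^ p * E m z := by
            intro m z
            rw [hE]
            simp only []
            rw [Finset.mul_sum, add_assoc, ← Finset.sum_add_distrib]
            congr 1
            refine Finset.sum_congr rfl fun j _ => ?_
            rw [hpoly j z]
            ring
          refine ⟨β', fun m him => ?_⟩
          by_cases hm : p < (c i - c m).toNat
          · -- m in S : gain one more order of vanishing
            have hmS : m ∈ S := by rw [hS, Finset.mem_filter]; exact ⟨Finset.mem_univ _, hm⟩
            have h0 : G m 0 + E m 0 = 0 := by rw [hE0 m hmS]; ring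
            obtain ⟨g₂, hg₂an, hg₂⟩ :=
              bolibruch_factor_zero ((hgG m him).add (hEan m)) h0
            refine ⟨g₂, hg₂an, ?_⟩
            have hminp : min ((c i - c m).toNat) p = p := by omega
            have hminp1 : min ((c i - c m).toNat) (p+1) = p+1 := by omega
            filter_upwards [hgeG m him] with z hz
            rw [hminp] at hz
            rw [hF' m z, hz, hminp1]
            have h3 : G m z + E m z = z * g₂ z := hg₂ z
            linear_combination (z ^ p) * h3
          · -- m not in S : order already achieved
            refine ⟨fun z => G m z + z ^ (p - (c i - c m).toNat) * E m z,
              (hgG m him).add ((analyticAt_id.pow _).mul (hEan m)), ?_⟩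
            have hminp : min ((c i - c m).toNat) p = (c i - c m).toNat := by omega
            have hminp1 : min ((c i - c m).toNat) (p+1) = (c i - c m).toNat := by omega
            filter_upwards [hgeG m him] with z hz
            rw [hminp] at hz
            rw [hF' m z, hz, hminp1]
            have hzp : z ^ p = z ^ ((c i - c m).toNat) * z ^ (p - (c i - c m).toNat) := by
              rw [← pow_add]
              congr 1
              omega
            rw [hzp]
            ring
    -- specialize to a large enough order
    obtain ⟨β, hβfin⟩ := main (Finset.univ.sup (fun j => (c i - c j).toNat))
    refine ⟨β, fun m him => ?_⟩
    obtain ⟨g, hgan, hge⟩ := hβfin m him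
    refine ⟨g, hgan, ?_⟩
    have hmin : ∀ j : Fin r,
        min ((c i - c j).toNat) (Finset.univ.sup (fun j => (c i - c j).toNat))
          = (c i - c j).toNat :=
      fun j => min_eq_left (Finset.le_sup (f := fun j => (c i - c j).toNat) (Finset.mem_univ j))
    simp only [hmin] at hge
    exact hge
  -- assemble
  choose β hβ using key
  refine ⟨fun i j p => β i p j, ?_⟩
  intro b hb i m him
  obtain ⟨g, hgan, hge⟩ := hβ i m him
  refine ⟨g, hgan, ?_⟩
  filter_upwards [hge] with z hz
  rw [Matrix.mul_apply, ← hz]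
  have expand : ∀ j : Fin r, b z i j * Q z j m =
      (if i = j then Q z j m else 0) +
      (if i < j then (∑ p ∈ Finset.range ((c i - c j).toNat), β i p j * z ^ p) * Q z j m
        else 0) := by
    intro j
    rw [hb z i j]
    by_cases h1 : i = j
    · subst h1
      simp [lt_irrefl]
    · by_cases h2 : i < j
      · simp [h1, h2]
      · simp [h1, h2]
  calc ∑ j : Fin r, b z i j * Q z j m
      = ∑ j : Fin r, ((if i = j then Q z j m else 0) +
          (if i < j then (∑ p ∈ Finset.range ((c i - c j).toNat), β i p j * z ^ p) * Q z j m
            else 0)) := Finset.sum_congr rfl fun j _ => expand j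
    _ = Q z i m + ∑ j ∈ Finset.univ.filter (fun j => i < j),
          (∑ q ∈ Finset.range ((c i - c j).toNat), β i q j * z ^ q) * Q z j m := by
        rw [Finset.sum_add_distrib, Finset.sum_ite_eq, ← Finset.sum_filter]
        simp
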